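/- arXiv:1309.2524 — 9 statements merged into one kernel-verified Lean document; each statement's English description precedes it below -/
import Mathlib

section
/- The identity map from X with the CW-topology to X_crs (the same set with the coarser topology τ) is continuous, and its restriction to the complement of the origin x is a homeomorphism onto its image. -/
open Set Topology Filter

noncomputable section

/-- The closed unit disk. -/
def D : Type := {z : ℂ // ‖z‖ ≤ 1}

instance : TopologicalSpace D := instTopologicalSpaceSubtype

/-- The wedge point on each disk. -/
def basept : D := ⟨1, by norm_num⟩

/-- The outer point (outer 0-cell) on each disk. -/
def outerpt : D := ⟨-1, by norm_num⟩

/-- Wedge relation: glue all copies of the base point together. -/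
def wsetoid : Setoid (ℕ × D) where
  r p q := p = q ∨ (p.2 = basept ∧ q.2 = basept)
  iseqv := by
    constructor
    · intro p; exact Or.inl rfl
    · rintro p q (rfl | ⟨h1, h2⟩)
      · exact Or.inl rfl
      · exact Or.inr ⟨h2, h1⟩
    · rintro p q r (rfl | ⟨h1, h2⟩) (rfl | ⟨h3, h4⟩)
      · exact Or.inl rfl
      · exact Or.inr ⟨h3, h4⟩
      · exact Or.inr ⟨h1, h2⟩
      · exact Or.inr ⟨h1, h4⟩

/-- The wedge of countably many closed 2-disks, with the weak (CW) topology. -/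
def X : Type := Quotient wsetoid

instance : TopologicalSpace X := instTopologicalSpaceQuotient

/-- The point of the `n`-th disk with disk-coordinate `z`. -/
def pt (n : ℕ) (z : D) : X := Quotient.mk wsetoid (n, z)

/-- The origin (the wedge point `x`). -/
def origin : X := pt 0 basept

/-- The outer 0-cell `e_n^0` of the `n`-th disk. -/
def outer (n : ℕ) : X := pt n outerpt

/-- The `n`-th closed 2-cell `C_n`. -/
def cell (n : ℕ) : Set X := Set.range (pt n)

/-- The open sets of the coarser topology `τ`: CW-open sets which either do not
contain the origin, or contain all but finitely many punctured cells `C_n \ {e_n^0}`. -/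
def crsOpen (U : Set X) : Prop :=
  IsOpen U ∧ (origin ∉ U ∨ {n : ℕ | ¬ (cell n \ {outer n} ⊆ U)}.Finite)

/-- The coarser topology `τ` on the wedge of disks. -/
def crsTop : TopologicalSpace X where
  IsOpen := crsOpen
  isOpen_univ := ⟨isOpen_univ, Or.inr (Set.Finite.subset Set.finite_empty
    (fun _ hn => absurd (Set.subset_univ _) hn))⟩
  isOpen_inter := by
    rintro U V ⟨hU, hU2⟩ ⟨hV, hV2⟩
    refine ⟨hU.inter hV, ?_⟩
    by_cases hx : origin ∈ U ∩ V
    · have h1 := hU2.resolve_left (fun h => h hx.1)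
      have h2 := hV2.resolve_left (fun h => h hx.2)
      refine Or.inr ((h1.union h2).subset ?_)
      intro n hn
      by_contra hc
      simp only [Set.mem_union, Set.mem_setOf_eq, not_or, not_not] at hc
      exact hn (Set.subset_inter hc.1 hc.2)
    · exact Or.inl hx
  isOpen_sUnion := by
    intro S hS
    refine ⟨isOpen_sUnion fun U hU => (hS U hU).1, ?_⟩
    by_cases hx : origin ∈ ⋃₀ S
    · obtain ⟨U, hUS, hxU⟩ := hx
      have h1 := (hS U hUS).2.resolve_left (fun h => h hxU)
      refine Or.inr (h1.subset ?_)
      intro n hn hsub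
      exact hn (hsub.trans (Set.subset_sUnion_of_mem hUS))
    · exact Or.inl hx

theorem TopologicalSpace.induced_val_eq_of_le {α : Type*} {t t' : TopologicalSpace α} {s : Set α}
    (hle : t ≤ t') (hs : IsOpen[t] s) (h : ∀ U ⊆ s, IsOpen[t] U → IsOpen[t'] U) :
    t'.induced ((↑) : s → α) = t.induced (↑) := by
  refine le_antisymm (fun V hV => ?_) (induced_mono hle)
  obtain ⟨U, hU, rfl⟩ := hV
  refine ⟨U ∩ s, h _ inter_subset_right (t.isOpen_inter _ _ hU hs), ?_⟩
  ext y
  simp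

theorem isClosed_singleton_origin : IsClosed ({origin} : Set X) := by
  have : T1Space D := inferInstanceAs (T1Space {z : ℂ // ‖z‖ ≤ 1})
  have hpre : Quotient.mk wsetoid ⁻¹' {origin} = Prod.snd ⁻¹' {basept} := by
    ext p
    refine ⟨fun hp => ?_, fun hp => Quotient.sound (Or.inr ⟨hp, rfl⟩)⟩
    rcases Quotient.exact hp with rfl | ⟨hb, -⟩
    exacts [rfl, hb]
  exact isClosed_coinduced.mpr (hpre ▸ isClosed_singleton.preimage continuous_snd)

theorem le_crsTop : (inferInstance : TopologicalSpace X) ≤ crsTop := fun _ hU => hU.1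

/-- the identity map from the CW-topology to the coarser topology is
continuous, and restricts to a homeomorphism onto its image away from the origin,
i.e. the two topologies induce the same subspace topology on the complement of the origin. -/
theorem id_continuous_homeo_off_origin :
    Continuous[instTopologicalSpaceQuotient, crsTop] (id : X → X) ∧
      crsTop.induced (Subtype.val : {y : X // y ≠ origin} → X) =
        (instTopologicalSpaceSubtype : TopologicalSpace {y : X // y ≠ origin}) :=
  ⟨continuous_id_of_le le_crsTop,
    TopologicalSpace.induced_val_eq_of_le (s := {origin}ᶜ) le_crsTop
      isClosed_singleton_origin.isOpen_compl
      fun _ hUs hU => ⟨hU, Or.inl fun h => hUs h rfl⟩⟩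

end
end

section
/- The space X_crs is Hausdorff. -/
open Set Topology Filter

noncomputable section

/-!
Each disk has a coordinate map `X → ℂ`: the disk coordinate on that disk and the constant `1`
(the wedge point) on all others. It is continuous for `τ`, because a neighbourhood of `1` pulls
back to a set containing every other disk. These maps jointly separate points, so `X_crs`
injects continuously into the Hausdorff space `ℕ → ℂ`.
-/

lemma continuous_crsTop_of_eventually_const {Y : Type*} [TopologicalSpace Y] {f : X → Y}
    (hf : Continuous f) (hconst : ∀ᶠ m in cofinite, ∀ z, f (pt m z) = f origin) :
    Continuous[crsTop, _] f := by
  refine (@continuous_def X Y crsTop _ f).mpr fun V hV => ⟨hV.preimage hf, ?_⟩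
  by_cases hV0 : origin ∈ f ⁻¹' V
  · refine Or.inr (hconst.mono fun m hm => ?_ : ∀ᶠ m in cofinite, cell m \ {outer m} ⊆ f ⁻¹' V)
    rintro _ ⟨⟨z, rfl⟩, -⟩
    simpa only [mem_preimage, hm z] using hV0
  · exact Or.inl hV0

def cellCoord (n : ℕ) : X → ℂ :=
  Quotient.lift (fun p : ℕ × D => if p.1 = n then p.2.val else 1) <| by
    rintro ⟨m, z⟩ ⟨k, w⟩ (h | ⟨hz, hw⟩)
    · rw [h]
    · have hz1 : z.val = 1 := congrArg Subtype.val hz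
      have hw1 : w.val = 1 := congrArg Subtype.val hw
      simp only [hz1, hw1, ite_self]

lemma cellCoord_pt (n m : ℕ) (z : D) : cellCoord n (pt m z) = if m = n then z.val else 1 := rfl

lemma continuous_cellCoord (n : ℕ) : Continuous (cellCoord n) :=
  Continuous.quotient_lift (continuous_prod_of_discrete_left.mpr fun m => by
    dsimp only
    split_ifs
    exacts [continuous_subtype_val, continuous_const]) _

lemma cellCoord_origin (n : ℕ) : cellCoord n origin = 1 :=
  ite_self (1 : ℂ)

lemma cellCoord_eventually_eq_origin (n : ℕ) :
    ∀ᶠ m in cofinite, ∀ z, cellCoord n (pt m z) = cellCoord n origin :=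
  (eventually_cofinite_ne n).mono fun m hm z => by
    rw [cellCoord_origin, cellCoord_pt, if_neg hm]

lemma injective_cellCoord : Function.Injective fun x n => cellCoord n x := by
  rintro ⟨m, z⟩ ⟨k, w⟩ h
  have hm : cellCoord m (pt m z) = cellCoord m (pt k w) := congrFun h m
  have hk : cellCoord k (pt m z) = cellCoord k (pt k w) := congrFun h k
  by_cases hmk : m = k
  · subst hmk
    simp only [cellCoord_pt, ↓reduceIte] at hm
    exact congrArg (pt m) (Subtype.ext hm)
  · simp only [cellCoord_pt, ↓reduceIte, hmk, Ne.symm hmk] at hm hk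
    exact Quotient.sound (Or.inr ⟨Subtype.ext hm, Subtype.ext hk.symm⟩)

/-- the space `X_crs` is Hausdorff. -/
theorem crs_hausdorff : @T2Space X crsTop :=
  @T2Space.of_injective_continuous X _ crsTop _ _ _ injective_cellCoord <|
    @continuous_pi _ _ _ crsTop _ _ fun n =>
      continuous_crsTop_of_eventually_const (continuous_cellCoord n)
        (cellCoord_eventually_eq_origin n)
end
end

section
/- The space X_crs is not paracompact: the open covering by U_0 = X_crs \ ⋃_{n≥1} e_n^0 and U_n = C_n \ {x} (n ≥ 1) admits no locally finite open refinement. -/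
/-! Every τ-neighbourhood of the origin contains all but finitely many punctured cells
`C_n \ {e_n^0}`. In a refinement of the cover, a member containing `e_n^0` must lie in
`C_n \ {x}`, so these members are distinct for distinct `n`; being open and `e_n^0` not
being isolated in the disk, each meets `C_n \ {e_n^0}`. Hence every neighbourhood of the
origin meets infinitely many of them. -/

open Set Topology Filter

noncomputable section

/-- The open set `U₀`: complement of all the outer 0-cells. -/
def U0 : Set X := {y | ∀ n, y ≠ outer n}

/-- The set `A` of all outer 0-cells. -/
def A : Set X := Set.range outer

lemma basept_ne_outerpt : basept ≠ outerpt := by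
  intro h
  have : (1 : ℂ) = -1 := congrArg Subtype.val h
  norm_num at this

instance : T1Space D := inferInstanceAs (T1Space {z : ℂ // ‖z‖ ≤ 1})

instance : ConnectedSpace D := by
  have h : IsConnected {z : ℂ | ‖z‖ ≤ 1} := by
    simpa [Metric.closedBall, dist_eq_norm] using
      Metric.isConnected_closedBall (x := (0 : ℂ)) zero_le_one
  exact Subtype.connectedSpace h

instance : Nontrivial D := ⟨⟨basept, outerpt, basept_ne_outerpt⟩⟩

lemma pt_eq_iff {n m : ℕ} {z w : D} :
    pt n z = pt m w ↔ (n = m ∧ z = w) ∨ (z = basept ∧ w = basept) := by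
  refine ⟨fun h => ?_, fun h => Quotient.sound ?_⟩
  · rcases Quotient.exact h with h | h
    · exact Or.inl (Prod.ext_iff.1 h)
    · exact Or.inr h
  · rcases h with ⟨rfl, rfl⟩ | h
    · exact Or.inl rfl
    · exact Or.inr h

lemma pt_eq_origin_iff {n : ℕ} {z : D} : pt n z = origin ↔ z = basept := by
  simp only [origin, pt_eq_iff, and_true]
  exact ⟨fun h => h.elim (·.2) id, Or.inr⟩

lemma pt_eq_outer_iff {n m : ℕ} {z : D} : pt n z = outer m ↔ n = m ∧ z = outerpt := by
  simp only [outer, pt_eq_iff, basept_ne_outerpt.symm, and_false, or_false]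

lemma origin_ne_outer (n : ℕ) : origin ≠ outer n := fun h =>
  basept_ne_outerpt (pt_eq_outer_iff.1 h).2

lemma pt_mem_cell_iff {n m : ℕ} {z : D} : pt n z ∈ cell m ↔ n = m ∨ z = basept := by
  constructor
  · rintro ⟨w, hw⟩
    rcases pt_eq_iff.1 hw.symm with ⟨rfl, -⟩ | ⟨h, -⟩
    · exact Or.inl rfl
    · exact Or.inr h
  · rintro (rfl | rfl)
    · exact ⟨z, rfl⟩
    · exact ⟨basept, pt_eq_iff.2 (Or.inr ⟨rfl, rfl⟩)⟩

lemma outer_mem_cell_iff {n m : ℕ} : outer n ∈ cell m ↔ n = m := by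
  rw [outer, pt_mem_cell_iff, or_iff_left basept_ne_outerpt.symm]

lemma continuous_pt (n : ℕ) : Continuous (pt n) :=
  continuous_quotient_mk'.comp (Continuous.prodMk_right n)

lemma isOpen_iff_forall_isOpen_preimage_pt {U : Set X} :
    IsOpen U ↔ ∀ n, IsOpen (pt n ⁻¹' U) := by
  refine ⟨fun h n => h.preimage (continuous_pt n), fun h => ?_⟩
  have : Quotient.mk wsetoid ⁻¹' U = ⋃ n, ({n} : Set ℕ) ×ˢ (pt n ⁻¹' U) := by
    ext ⟨n, z⟩
    simp only [mem_iUnion, mem_prod, mem_singleton_iff, exists_eq_left']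
    rfl
  exact isOpen_coinduced.2 (this ▸ isOpen_iUnion fun n => (isOpen_discrete _).prod (h n))

lemma crsOpen_U0 : crsOpen U0 := by
  refine ⟨isOpen_iff_forall_isOpen_preimage_pt.2 fun n => ?_, Or.inr ?_⟩
  · have : pt n ⁻¹' U0 = {outerpt}ᶜ := by
      ext z
      simp [U0, pt_eq_outer_iff]
    exact this ▸ isOpen_compl_singleton
  · refine finite_empty.subset fun n hn => hn ?_
    rintro _ ⟨⟨z, rfl⟩, hz⟩ m hm
    obtain ⟨rfl, rfl⟩ := pt_eq_outer_iff.1 hm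
    exact hz rfl

lemma crsOpen_cell_diff_origin (n : ℕ) : crsOpen (cell n \ {origin}) := by
  refine ⟨isOpen_iff_forall_isOpen_preimage_pt.2 fun m => ?_, Or.inl fun h => h.2 rfl⟩
  by_cases hmn : m = n
  · have : pt m ⁻¹' (cell n \ {origin}) = {basept}ᶜ := by
      ext z
      simp [pt_mem_cell_iff, pt_eq_origin_iff, hmn]
    exact this ▸ isOpen_compl_singleton
  · have : pt m ⁻¹' (cell n \ {origin}) = ∅ := by
      ext z
      simp +contextual [pt_mem_cell_iff, pt_eq_origin_iff, hmn]
    exact this ▸ isOpen_empty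

def wedgeCover : Set (Set X) := insert U0 (range fun n => cell n \ {origin})

lemma isOpen_of_mem_wedgeCover : ∀ W ∈ wedgeCover, IsOpen[crsTop] W := by
  rintro W (rfl | ⟨n, rfl⟩)
  · exact crsOpen_U0
  · exact crsOpen_cell_diff_origin n

lemma sUnion_wedgeCover : ⋃₀ wedgeCover = univ := by
  refine eq_univ_of_forall fun y => ?_
  by_cases hy : ∃ n, y = outer n
  · obtain ⟨n, rfl⟩ := hy
    exact ⟨_, mem_insert_of_mem _ ⟨n, rfl⟩, ⟨outerpt, rfl⟩, (origin_ne_outer n).symm⟩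
  · exact ⟨U0, mem_insert _ _, fun n h => hy ⟨n, h⟩⟩

lemma subset_cell_diff_origin_of_outer_mem {V W : Set X} {n : ℕ} (hW : W ∈ wedgeCover)
    (hVW : V ⊆ W) (hn : outer n ∈ V) : V ⊆ cell n \ {origin} := by
  rcases hW with rfl | ⟨m, rfl⟩
  · exact absurd rfl (hVW hn n)
  · obtain rfl := outer_mem_cell_iff.1 (hVW hn).1
    exact hVW

lemma inter_cell_diff_outer_nonempty {V : Set X} {n : ℕ} (hV : IsOpen V) (hn : outer n ∈ V) :
    (V ∩ (cell n \ {outer n})).Nonempty := by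
  have hnhds : pt n ⁻¹' V ∈ 𝓝 outerpt := (hV.preimage (continuous_pt n)).mem_nhds hn
  -- `𝓝[≠] outerpt` is nontrivial because `D` is connected, nontrivial and T1.
  obtain ⟨z, hzV, hz⟩ := ((eventually_nhdsWithin_of_eventually_nhds hnhds).and
    (self_mem_nhdsWithin (s := {outerpt}ᶜ))).exists
  exact ⟨pt n z, hzV, ⟨z, rfl⟩, fun h => hz (pt_eq_outer_iff.1 h).2⟩

lemma eventually_cell_diff_outer_subset {t : Set X} (ht : t ∈ @nhds X crsTop origin) :
    ∀ᶠ n in cofinite, cell n \ {outer n} ⊆ t := by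
  obtain ⟨U, hUt, hU, hoU⟩ := (@mem_nhds_iff X crsTop origin t).1 ht
  exact (eventually_cofinite.2 ((hU : crsOpen U).2.resolve_left (· hoU))).mono
    fun n hn => hn.trans hUt

theorem not_locallyFinite_of_refines_wedgeCover {ι : Type*} (v : ι → Set X)
    (hv : ∀ i, IsOpen[crsTop] (v i)) (hcov : ⋃ i, v i = univ)
    (href : ∀ i, ∃ W ∈ wedgeCover, v i ⊆ W) : ¬ @LocallyFinite ι X crsTop v := by
  intro hlf
  have hmem (n : ℕ) : ∃ i, outer n ∈ v i := mem_iUnion.1 (hcov ▸ mem_univ (outer n))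
  choose i hi using hmem
  have hsub (n : ℕ) : v (i n) ⊆ cell n \ {origin} :=
    let ⟨_, hW, hVW⟩ := href (i n)
    subset_cell_diff_origin_of_outer_mem hW hVW (hi n)
  have hinj : Function.Injective i := fun n m h =>
    outer_mem_cell_iff.1 (hsub m (h ▸ hi n)).1
  obtain ⟨t, ht, hfin⟩ := (@LocallyFinite.comp_injective _ _ _ crsTop _ _ hlf hinj) origin
  have hdisj : ∀ᶠ n in cofinite, ¬ (v (i n) ∩ t).Nonempty :=
    eventually_cofinite.2 (by simpa using hfin)
  obtain ⟨n, hnt, hn⟩ := ((eventually_cell_diff_outer_subset ht).and hdisj).exists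
  obtain ⟨y, hyv, hy⟩ := inter_cell_diff_outer_nonempty (hv (i n)).1 (hi n)
  exact hn ⟨y, hyv, hnt hy⟩

theorem not_paracompactSpace_crsTop : ¬ @ParacompactSpace X crsTop := by
  intro hp
  obtain ⟨β, t, hto, htc, htlf, htref⟩ := 
    @ParacompactSpace.locallyFinite_refinement X crsTop hp wedgeCover Subtype.val
      (fun W => isOpen_of_mem_wedgeCover W W.2) (sUnion_eq_iUnion ▸ sUnion_wedgeCover)
  refine not_locallyFinite_of_refines_wedgeCover t hto htc (fun b => ?_) htlf
  obtain ⟨W, hW⟩ := htref b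
  exact ⟨W, W.2, hW⟩

/-- `X_crs` is not paracompact: the open cover by `U₀` and the sets
`C_n \\ {x}` admits no locally finite open refinement. -/
theorem crs_not_paracompact :
    ¬ @ParacompactSpace X crsTop ∧
    ((∀ W ∈ insert U0 (Set.range fun n => cell n \ {origin}), IsOpen[crsTop] W) ∧
      ⋃₀ insert U0 (Set.range fun n => cell n \ {origin}) = Set.univ ∧
      ¬ ∃ R : Set (Set X),
          (∀ V ∈ R, IsOpen[crsTop] V) ∧ ⋃₀ R = Set.univ ∧
          (∀ V ∈ R, ∃ W ∈ insert U0 (Set.range fun n => cell n \ {origin}), V ⊆ W) ∧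
          @LocallyFinite R X crsTop (Subtype.val : R → Set X)) := by
  refine ⟨not_paracompactSpace_crsTop, isOpen_of_mem_wedgeCover, sUnion_wedgeCover, ?_⟩
  rintro ⟨R, hRo, hRc, hRref, hRlf⟩
  exact not_locallyFinite_of_refines_wedgeCover Subtype.val (fun V => hRo V V.2)
    (sUnion_eq_iUnion ▸ hRc) (fun V => hRref V.1 V.2) hRlf

end
end

section
/- The space X_crs is not regular: every open neighborhood of the origin x intersects every open neighborhood of the closed set A = ⋃_{n≥1} e_n^0. -/
open Set Topology Filter

noncomputable section

instance inst_s4 : ConnectedSpace D := by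
  have h : IsConnected {z : ℂ | ‖z‖ ≤ 1} := by
    rw [show {z : ℂ | ‖z‖ ≤ 1} = Metric.closedBall 0 1 by ext; simp]
    exact (convex_closedBall 0 1).isConnected ⟨0, by simp⟩
  exact Subtype.connectedSpace h

lemma pt_eq_pt_iff {m n : ℕ} {z w : D} :
    pt m z = pt n w ↔ (m, z) = (n, w) ∨ (z = basept ∧ w = basept) :=
  Quotient.eq (r := wsetoid)

lemma pt_mem_A_iff {n : ℕ} {z : D} : pt n z ∈ A ↔ z = outerpt := by
  constructor
  · rintro ⟨m, hm⟩
    rcases pt_eq_pt_iff.mp hm with h | ⟨h, -⟩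
    · exact (Prod.ext_iff.mp h).2.symm
    · exact absurd h.symm basept_ne_outerpt
  · rintro rfl
    exact ⟨n, rfl⟩

lemma pt_mem_cell_diff_outer {n : ℕ} {z : D} (hz : z ≠ outerpt) :
    pt n z ∈ cell n \ {outer n} :=
  ⟨⟨z, rfl⟩, fun h => hz (pt_mem_A_iff.mp ⟨n, h.symm⟩)⟩

lemma cell_diff_outer_subset_compl_A (n : ℕ) : cell n \ {outer n} ⊆ Aᶜ := by
  rintro _ ⟨⟨z, rfl⟩, hz⟩ hA
  exact hz (congrArg (pt n) (pt_mem_A_iff.mp hA))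

lemma isOpen_compl_A : IsOpen Aᶜ := by
  have h : Quotient.mk wsetoid ⁻¹' Aᶜ = Prod.snd ⁻¹' {outerpt}ᶜ := by
    ext ⟨n, z⟩
    exact not_congr pt_mem_A_iff
  exact isQuotientMap_quotient_mk'.isOpen_preimage.mp
    (h ▸ isOpen_compl_singleton.preimage continuous_snd)

lemma isClosed_A_crs : IsClosed[crsTop] A := by
  rw [← @isOpen_compl_iff X A crsTop]
  exact ⟨isOpen_compl_A,
    Or.inr (finite_empty.subset fun n hn => hn (cell_diff_outer_subset_compl_A n))⟩

lemma crsOpen.exists_cell_diff_outer_subset {U : Set X} (hU : crsOpen U) (hx : origin ∈ U) :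
    ∃ n, cell n \ {outer n} ⊆ U := by
  obtain ⟨n, hn⟩ := (hU.2.resolve_left (not_not.mpr hx)).infinite_compl.nonempty
  exact ⟨n, not_not.mp hn⟩

lemma exists_ne_outerpt_pt_mem {V : Set X} (hV : IsOpen V) {n : ℕ} (hn : outer n ∈ V) :
    ∃ z ≠ outerpt, pt n z ∈ V := by
  have hnhds : pt n ⁻¹' V ∈ 𝓝 outerpt := (hV.preimage (continuous_pt n)).mem_nhds hn
  obtain ⟨z, hz, hzV⟩ := Filter.nonempty_of_mem (inter_mem_nhdsWithin {outerpt}ᶜ hnhds)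
  exact ⟨z, hz, hzV⟩

/-- `X_crs` is not regular: `A` is closed, yet every open neighborhood of
the origin meets every open neighborhood of `A`. -/
theorem crs_not_regular :
    @IsClosed X crsTop A ∧
    ∀ U V : Set X, IsOpen[crsTop] U → IsOpen[crsTop] V → origin ∈ U → A ⊆ V →
      (U ∩ V).Nonempty := by
  refine ⟨isClosed_A_crs, fun U V hU hV hxU hAV => ?_⟩
  obtain ⟨n, hn⟩ := hU.exists_cell_diff_outer_subset hxU
  obtain ⟨z, hz, hzV⟩ := exists_ne_outerpt_pt_mem hV.1 (hAV ⟨n, rfl⟩)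
  exact ⟨pt n z, hn (pt_mem_cell_diff_outer hz), hzV⟩

end
end

section
/- For every continuous function g : U_0 → ℝ, where U_0 = X_crs \ ⋃_{n≥1} e_n^0, there exists m ≥ 1 such that g is bounded on ⋃_{n≥m} (C_n ∩ U_0). -/
open Set Topology Filter

noncomputable section

lemma origin_mem_U0 : origin ∈ U0 := by
  intro n h
  rcases Quotient.exact h with h' | ⟨h1, h2⟩
  · exact basept_ne_outerpt (congrArg Prod.snd h')
  · exact basept_ne_outerpt h2.symm

/-- every continuous real-valued function on `U₀ ⊆ X_crs` is bounded on the
union of all but finitely many of the sets `C_n ∩ U₀`. -/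
theorem continuous_on_U0_bounded_tail
    (g : U0 → ℝ) (hg : @Continuous U0 ℝ (crsTop.induced (Subtype.val : U0 → X)) _ g) :
    ∃ m : ℕ, ∃ M : ℝ, ∀ y : U0, (∃ n, m ≤ n ∧ (y : X) ∈ cell n) → |g y| ≤ M := by
  classical
  set x0 : U0 := ⟨origin, origin_mem_U0⟩ with hx0def
  have hV : @IsOpen U0 (crsTop.induced (Subtype.val : U0 → X))
      (g ⁻¹' Metric.ball (g x0) 1) :=
    @IsOpen.preimage U0 ℝ (crsTop.induced _) _ g hg _ Metric.isOpen_ball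
  obtain ⟨W, hW, hWV⟩ := (@isOpen_induced_iff U0 X crsTop _ _).mp hV
  have hWcrs : crsOpen W := hW
  have hx0W : origin ∈ W := by
    have : x0 ∈ Subtype.val ⁻¹' W := by
      rw [hWV]; exact Metric.mem_ball_self one_pos
    exact this
  have hfin := hWcrs.2.resolve_left (fun h => h hx0W)
  obtain ⟨b, hb⟩ := hfin.bddAbove
  refine ⟨b + 1, |g x0| + 1, ?_⟩
  rintro y ⟨n, hmn, z, hz⟩
  have hnW : cell n \ {outer n} ⊆ W := by
    by_contra hc
    have : n ≤ b := hb hc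
    omega
  have hyW : (y : X) ∈ W := by
    refine hnW ⟨⟨z, hz⟩, ?_⟩
    simp only [Set.mem_singleton_iff]
    exact y.2 n
  have hyV : y ∈ g ⁻¹' Metric.ball (g x0) 1 := by
    rw [← hWV]; exact hyW
  have hd : |g y - g x0| < 1 := by
    have := hyV
    simp only [Set.mem_preimage, Metric.mem_ball, Real.dist_eq] at this
    exact this
  calc |g y| ≤ |g y - g x0| + |g x0| := by
        have := abs_sub_abs_le_abs_sub (g y) (g x0); linarith [abs_abs (g y)]
      _ ≤ |g x0| + 1 := by linarith

end
end

section
/- Every continuous function g : X_crs → ℝ is bounded on all but finitely many of the closed 2-cells C_n. -/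
open Set Topology Filter

noncomputable section

/-- every continuous real-valued function on `X_crs` is bounded on all but
finitely many of the closed 2-cells. -/
theorem continuous_bounded_on_almost_all_cells
    (g : X → ℝ) (hg : @Continuous X ℝ crsTop _ g) :
    {n : ℕ | ¬ ∃ M : ℝ, ∀ y ∈ cell n, |g y| ≤ M}.Finite := by
  have hU : crsOpen (g ⁻¹' Metric.ball (g origin) 1) :=
    @Continuous.isOpen_preimage X ℝ crsTop _ g hg _ Metric.isOpen_ball
  have horig : origin ∈ g ⁻¹' Metric.ball (g origin) 1 := by
    simp [Metric.mem_ball]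
  have hfin := hU.2.resolve_left (fun h => h horig)
  refine hfin.subset ?_
  intro n hn
  simp only [Set.mem_setOf_eq] at hn ⊢
  intro hsub
  apply hn
  refine ⟨max (|g origin| + 1) |g (outer n)|, fun y hy => ?_⟩
  by_cases hyo : y = outer n
  · subst hyo; exact le_max_right _ _
  · have hyU : y ∈ g ⁻¹' Metric.ball (g origin) 1 := hsub ⟨hy, hyo⟩
    have : |g y - g origin| < 1 := by
      simpa [Real.dist_eq] using (Metric.mem_ball.mp hyU)
    have h2 : |g y| ≤ |g origin| + 1 := by
      calc |g y| = |g y - g origin + g origin| := by ring_nf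
        _ ≤ |g y - g origin| + |g origin| := abs_add_le _ _
        _ ≤ |g origin| + 1 := by linarith
    exact h2.trans (le_max_left _ _)

end
end

section
/- The first Čech cohomology of X_crs with coefficients in the sheaf of continuous real-valued functions is nonzero: for the open cover U_0 = X_crs \ ⋃_{n≥1} e_n^0, U_n = C_n \ {x} (n ≥ 1), there is a Čech 1-cocycle (given on U_0 ∩ U_n by 1/f_n for continuous functions f_n with an isolated zero at e_n^0) whose class remains nonzero in the direct limit over refinements. -/
open Set Topology Filter

noncomputable section

/-!
Every `τ`-neighbourhood of the origin contains all but finitely many punctured cells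
`C_N \ {e_N^0}`, so a section that is continuous at the origin is bounded below on such a cell
`C_N`, while a section continuous at `e_N^0` is bounded above near `e_N^0`. If the cocycle were
a coboundary on a refinement, `1 / f_N` would be the difference of two such sections near
`e_N^0`, hence bounded above there; but it tends to `+∞` at `e_N^0`.
-/

namespace Wedge

lemma basept_ne_outerpt : basept ≠ outerpt := by
  intro h
  have h1 : (1 : ℂ) = -1 := congrArg Subtype.val h
  norm_num at h1

-- With these instances `𝓝[≠] z` is a proper filter on the disk
-- (`ConnectedSpace.neBot_nhdsWithin_compl_of_nontrivial_of_t1space`).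
instance : T1Space D := inferInstanceAs (T1Space {z : ℂ // ‖z‖ ≤ 1})

instance : ConnectedSpace D :=
  isConnected_iff_connectedSpace (s := {z : ℂ | ‖z‖ ≤ 1}) |>.1 <| by
    simpa [Metric.closedBall, dist_zero_right] using
      (convex_closedBall (0 : ℂ) 1).isConnected ⟨0, by simp⟩

instance : Nontrivial D := ⟨⟨basept, outerpt, basept_ne_outerpt⟩⟩


lemma exists_pt (y : X) : ∃ n z, pt n z = y := by
  obtain ⟨⟨n, z⟩, rfl⟩ := Quotient.exists_rep y
  exact ⟨n, z, rfl⟩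

lemma pt_basept (n : ℕ) : pt n basept = origin :=
  Quotient.sound (Or.inr ⟨rfl, rfl⟩)

lemma continuous_pt (n : ℕ) : Continuous (pt n) :=
  continuous_quotient_mk'.comp (Continuous.prodMk_right n)

def diskCoord : X → D :=
  Quotient.lift Prod.snd <| by
    rintro ⟨m, z⟩ ⟨n, w⟩ (h | ⟨hz, hw⟩)
    exacts [congrArg Prod.snd h, hz.trans hw.symm]

def cellCoord (n : ℕ) : X → D :=
  Quotient.lift (fun p : ℕ × D => if p.1 = n then p.2 else basept) <| by
    rintro ⟨m, z⟩ ⟨k, w⟩ (h | ⟨hz, hw⟩)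
    · rw [h]
    · dsimp only at hz hw
      subst hz hw
      split_ifs <;> rfl

@[simp] lemma diskCoord_pt (n : ℕ) (z : D) : diskCoord (pt n z) = z := rfl

@[simp] lemma diskCoord_origin : diskCoord origin = basept := rfl

lemma cellCoord_pt (n m : ℕ) (z : D) :
    cellCoord n (pt m z) = if m = n then z else basept := rfl

@[simp] lemma cellCoord_pt_self (n : ℕ) (z : D) : cellCoord n (pt n z) = z := if_pos rfl

lemma continuous_diskCoord : Continuous diskCoord :=
  continuous_snd.quotient_lift _

lemma continuous_cellCoord (n : ℕ) : Continuous (cellCoord n) := by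
  refine Continuous.quotient_lift (continuous_prod_of_discrete_left.2 fun m => ?_) _
  by_cases h : m = n <;> simp only [h, if_true, if_false] <;> fun_prop

lemma eq_of_cellCoord_pt_ne_basept {n m : ℕ} {z : D} (h : cellCoord n (pt m z) ≠ basept) :
    m = n := by
  by_contra hmn
  exact h (if_neg hmn)

lemma U0_eq_preimage : U0 = diskCoord ⁻¹' {outerpt}ᶜ := by
  ext y
  obtain ⟨m, z, rfl⟩ := exists_pt y
  refine ⟨fun h (hz : z = outerpt) => h m (by rw [hz]; rfl), fun hz n h => hz ?_⟩
  rw [h]; rfl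

lemma puncturedCell_eq_preimage (n : ℕ) : cell n \ {origin} = cellCoord n ⁻¹' {basept}ᶜ := by
  ext y
  obtain ⟨m, z, rfl⟩ := exists_pt y
  constructor
  · rintro ⟨⟨w, hw⟩, hz⟩ (h : cellCoord n (pt m z) = basept)
    rw [← hw, cellCoord_pt_self] at h
    exact hz (by rw [← hw, h, pt_basept]; rfl)
  · intro h
    obtain rfl := eq_of_cellCoord_pt_ne_basept h
    refine ⟨mem_range_self z, fun ho => h ?_⟩
    simpa using congrArg diskCoord ho

lemma isOpen_U0 : IsOpen U0 := by
  rw [U0_eq_preimage]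
  exact isOpen_compl_singleton.preimage continuous_diskCoord

lemma isOpen_puncturedCell (n : ℕ) : IsOpen (cell n \ {origin}) := by
  rw [puncturedCell_eq_preimage]
  exact isOpen_compl_singleton.preimage (continuous_cellCoord n)

lemma disjoint_puncturedCell {n m : ℕ} (h : n ≠ m) :
    Disjoint (cell n \ {origin}) (cell m \ {origin}) := by
  rw [puncturedCell_eq_preimage, puncturedCell_eq_preimage, Set.disjoint_left]
  intro y hn hm
  obtain ⟨k, z, rfl⟩ := exists_pt y
  exact h ((eq_of_cellCoord_pt_ne_basept hn).symm.trans (eq_of_cellCoord_pt_ne_basept hm))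

lemma cell_diff_outer_subset_U0 (n : ℕ) : cell n \ {outer n} ⊆ U0 := by
  rintro _ ⟨⟨z, rfl⟩, hz⟩
  rw [U0_eq_preimage]
  rintro (h : z = outerpt)
  exact hz (by rw [h]; rfl)

lemma pt_mem_cell_diff_outer (n : ℕ) {z : D} (hz : z ≠ outerpt) : pt n z ∈ cell n \ {outer n} :=
  ⟨mem_range_self z, fun h => hz (congrArg diskCoord h)⟩

lemma cellCoord_ne_outerpt_of_mem_U0 (n : ℕ) {y : X} (hy : y ∈ U0) : cellCoord n y ≠ outerpt := by
  rw [U0_eq_preimage] at hy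
  obtain ⟨m, z, rfl⟩ := exists_pt y
  rw [cellCoord_pt]
  split_ifs
  exacts [hy, basept_ne_outerpt]

lemma instTopologicalSpaceX_le_crsTop : (inferInstance : TopologicalSpace X) ≤ crsTop :=
  fun _ hs => hs.1

lemma continuous_pt_crsTop (n : ℕ) : Continuous[_, crsTop] (pt n) :=
  continuous_def.2 fun s hs => (continuous_pt n).isOpen_preimage s hs.1

lemma nhds_crsTop_eq {O : Set X} (hO : IsOpen O) (h : origin ∉ O) {y : X} (hy : y ∈ O) :
    @nhds X crsTop y = 𝓝 y := by
  refine le_antisymm (fun T hT => ?_) (nhds_mono instTopologicalSpaceX_le_crsTop)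
  obtain ⟨W, hWT, hW, hyW⟩ := mem_nhds_iff.1 hT
  exact (@mem_nhds_iff X crsTop _ _).2
    ⟨W ∩ O, inter_subset_left.trans hWT, ⟨hW.inter hO, Or.inl fun ho => h ho.2⟩, hyW, hy⟩

lemma continuousOn_crsTop_of_isOpen {β : Type*} [TopologicalSpace β] {f : X → β} {O : Set X}
    (hO : IsOpen O) (h : origin ∉ O) (hf : ContinuousOn f O) :
    @ContinuousOn X β crsTop _ f O := by
  intro y hy
  change Tendsto f (@nhds X crsTop y ⊓ 𝓟 O) _
  rw [nhds_crsTop_eq hO h hy]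
  exact hf y hy

lemma eventually_cofinite_punctured_cell_subset {P : Set X} (hP : P ∈ @nhds X crsTop origin) :
    ∀ᶠ n in cofinite, cell n \ {outer n} ⊆ P := by
  obtain ⟨W, hWP, hW, hoW⟩ := (@mem_nhds_iff X crsTop _ _).1 hP
  exact (hW.2.resolve_left (not_not_intro hoW)).subset fun n hn hsub => hn (hsub.trans hWP)

/-- `1 / f_n` for `f_n y = |y - e_n^0|`, measured in the disk coordinate of `C_n`. -/
def invDistOuter (n : ℕ) (y : X) : ℝ := ‖(cellCoord n y).1 + 1‖⁻¹

lemma val_add_one_ne_zero {z : D} (hz : z ≠ outerpt) : z.1 + 1 ≠ 0 :=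
  fun h => hz (Subtype.ext (eq_neg_of_add_eq_zero_left h))

lemma continuousOn_invDistOuter (n : ℕ) : ContinuousOn (invDistOuter n) U0 :=
  ((continuous_subtype_val.comp (continuous_cellCoord n)).add
    continuous_const).norm.continuousOn.inv₀ fun _ hy =>
      norm_ne_zero_iff.2 (val_add_one_ne_zero (cellCoord_ne_outerpt_of_mem_U0 n hy))

lemma tendsto_invDistOuter_pt (n : ℕ) :
    Tendsto (fun z => invDistOuter n (pt n z)) (𝓝[≠] outerpt) atTop := by
  have hval : Tendsto (fun z : D => z.1) (𝓝[≠] outerpt) (𝓝[≠] (-1 : ℂ)) :=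
    continuous_subtype_val.continuousWithinAt.tendsto_nhdsWithin
      fun z hz h => hz (Subtype.ext h)
  simpa [invDistOuter, Function.comp_def, Pi.inv_def] using
    ((tendsto_norm_sub_self_nhdsNE (-1 : ℂ)).comp hval).inv_tendsto_nhdsGT_zero

def cover : ℕ → Set X
  | 0 => U0
  | n + 1 => cell n \ {origin}

/-- The cocycle is the coboundary of this discontinuous `0`-cochain, which makes the cocycle
identity automatic. -/
def potential : ℕ → X → ℝ
  | 0 => 0
  | n + 1 => invDistOuter n

def cocycle (i j : ℕ) (y : X) : ℝ := potential j y - potential i y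

lemma cocycle_add_cocycle (i j k : ℕ) (y : X) :
    cocycle i j y + cocycle j k y = cocycle i k y :=
  sub_add_sub_cancel' _ _ _

lemma cocycle_zero_succ (n : ℕ) (y : X) : cocycle 0 (n + 1) y = invDistOuter n y :=
  sub_zero _

lemma isOpen_crsTop_cover : ∀ i, IsOpen[crsTop] (cover i)
  | 0 => ⟨isOpen_U0, Or.inr (finite_empty.subset fun n hn => hn (cell_diff_outer_subset_U0 n))⟩
  | n + 1 => ⟨isOpen_puncturedCell n, Or.inl fun h => h.2 rfl⟩

lemma iUnion_cover : ⋃ i, cover i = univ := by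
  refine eq_univ_of_forall fun y => ?_
  obtain ⟨n, z, rfl⟩ := exists_pt y
  by_cases hz : z = outerpt
  · refine mem_iUnion.2 ⟨n + 1, ?_⟩
    rw [cover, puncturedCell_eq_preimage, hz]
    simpa using basept_ne_outerpt.symm
  · exact mem_iUnion.2 ⟨0, by rw [cover, U0_eq_preimage]; exact hz⟩

lemma eq_zero_of_origin_mem_cover : ∀ {i}, origin ∈ cover i → i = 0
  | 0, _ => rfl
  | _ + 1, h => absurd rfl h.2

lemma eq_succ_of_outer_mem_cover {n : ℕ} : ∀ {i}, outer n ∈ cover i → i = n + 1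
  | 0, h => absurd rfl (h n)
  | m + 1, h => by
    rw [cover, puncturedCell_eq_preimage] at h
    rw [eq_of_cellCoord_pt_ne_basept h]

lemma continuousOn_potential {i j : ℕ} (hij : i ≠ j) :
    @ContinuousOn X ℝ crsTop _ (potential i) (cover i ∩ cover j) := by
  match i, j with
  | 0, _ => exact @continuousOn_const _ _ crsTop _ _ _
  | n + 1, 0 =>
    exact continuousOn_crsTop_of_isOpen ((isOpen_puncturedCell n).inter isOpen_U0)
      (fun h => h.1.2 rfl) ((continuousOn_invDistOuter n).mono inter_subset_right)
  | n + 1, m + 1 =>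
    rw [cover, cover, (disjoint_puncturedCell fun h => hij (congrArg (· + 1) h)).inter_eq]
    exact @continuousOn_empty _ _ crsTop _ _

lemma continuousOn_cocycle (i j : ℕ) :
    @ContinuousOn X ℝ crsTop _ (cocycle i j) (cover i ∩ cover j) := by
  let _ : TopologicalSpace X := crsTop
  by_cases hij : i = j
  · subst hij
    have hzero : cocycle i i = 0 := funext fun _ => sub_self _
    exact hzero ▸ continuousOn_const
  · exact ((continuousOn_potential (Ne.symm hij)).mono (inter_comm _ _).subset).sub
      (continuousOn_potential hij)

lemma eventually_cofinite_forall_mem_and_lt {s : X → ℝ} {V : Set X} (hV : IsOpen[crsTop] V)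
    (ho : origin ∈ V) (hs : @ContinuousOn X ℝ crsTop _ s V) :
    ∀ᶠ n in cofinite, ∀ y ∈ cell n \ {outer n}, y ∈ V ∧ s origin - 1 < s y := by
  let _ : TopologicalSpace X := crsTop
  exact eventually_cofinite_punctured_cell_subset <| (eventually_mem_set.2 (hV.mem_nhds ho)).and <|
    (hs.continuousAt (hV.mem_nhds ho)).eventually_const_lt (sub_one_lt _)

lemma eventually_pt_mem_and_lt {s : X → ℝ} {V : Set X} (hV : IsOpen[crsTop] V)
    (hs : @ContinuousOn X ℝ crsTop _ s V) {n : ℕ} {z : D} (hz : pt n z ∈ V) :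
    ∀ᶠ w in 𝓝 z, pt n w ∈ V ∧ s (pt n w) < s (pt n z) + 1 := by
  let _ : TopologicalSpace X := crsTop
  have hpt := (continuous_pt_crsTop n).continuousAt (x := z)
  exact (eventually_mem_set.2 (hpt.preimage_mem_nhds (hV.mem_nhds hz))).and <|
    ((hs.continuousAt (hV.mem_nhds hz)).comp hpt).eventually_lt_const (lt_add_one _)

theorem cocycle_not_coboundary {κ : Type*} (V : κ → Set X) (σ : κ → ℕ)
    (hV : ∀ k, IsOpen[crsTop] (V k)) (hcov : ⋃ k, V k = univ) (hsub : ∀ k, V k ⊆ cover (σ k))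
    (s : κ → X → ℝ) (hs : ∀ k, @ContinuousOn X ℝ crsTop _ (s k) (V k)) :
    ¬ ∀ k l, ∀ y ∈ V k ∩ V l, cocycle (σ k) (σ l) y = s l y - s k y := by
  intro hcob
  obtain ⟨k₀, hk₀⟩ := mem_iUnion.1 (hcov ▸ mem_univ origin)
  obtain ⟨N, hN⟩ := (eventually_cofinite_forall_mem_and_lt (hV k₀) hk₀ (hs k₀)).exists
  obtain ⟨k₁, hk₁⟩ := mem_iUnion.1 (hcov ▸ mem_univ (outer N))
  have h₀ : ∀ᶠ z in 𝓝[≠] outerpt, pt N z ∈ V k₀ ∧ s k₀ origin - 1 < s k₀ (pt N z) :=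
    eventually_nhdsWithin_of_forall fun z hz => hN _ (pt_mem_cell_diff_outer N hz)
  have h₁ : ∀ᶠ z in 𝓝[≠] outerpt, pt N z ∈ V k₁ ∧ s k₁ (pt N z) < s k₁ (outer N) + 1 :=
    nhdsWithin_le_nhds (eventually_pt_mem_and_lt (hV k₁) (hs k₁) hk₁)
  obtain ⟨z, ⟨hz₀, hlt₀⟩, ⟨hz₁, hlt₁⟩, hbig⟩ := (h₀.and <| h₁.and <|
    (tendsto_invDistOuter_pt N).eventually_gt_atTop (s k₁ (outer N) - s k₀ origin + 2)).exists
  have heq := hcob k₀ k₁ _ ⟨hz₀, hz₁⟩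
  rw [eq_zero_of_origin_mem_cover (hsub k₀ hk₀), eq_succ_of_outer_mem_cover (hsub k₁ hk₁),
    cocycle_zero_succ] at heq
  linarith

end Wedge

open Wedge

/-- first Čech cohomology of `X_crs` with coefficients in the sheaf of
continuous real-valued functions is nonzero: for the cover by `U₀` and the punctured
cells there is a continuous Čech 1-cocycle which does not become a coboundary on any
open refinement. -/
theorem cech_H1_continuous_functions_nonzero :
    ∃ (U : ℕ → Set X) (f : ℕ → ℕ → X → ℝ),
      U 0 = U0 ∧ (∀ n : ℕ, U (n + 1) = cell n \ {origin}) ∧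
      (∀ i, IsOpen[crsTop] (U i)) ∧ (⋃ i, U i) = Set.univ ∧
      (∀ i j, @ContinuousOn X ℝ crsTop _ (f i j) (U i ∩ U j)) ∧
      (∀ i j k, ∀ y ∈ U i ∩ U j ∩ U k, f i j y + f j k y = f i k y) ∧
      ∀ (κ : Type) (V : κ → Set X) (σ : κ → ℕ),
        (∀ k, IsOpen[crsTop] (V k)) → (⋃ k, V k) = Set.univ →
        (∀ k, V k ⊆ U (σ k)) →
        ¬ ∃ s : κ → X → ℝ,
            (∀ k, @ContinuousOn X ℝ crsTop _ (s k) (V k)) ∧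
            ∀ k l, ∀ y ∈ V k ∩ V l, f (σ k) (σ l) y = s l y - s k y :=
  ⟨cover, cocycle, rfl, fun _ => rfl, isOpen_crsTop_cover, iUnion_cover, continuousOn_cocycle,
    fun i j k y _ => cocycle_add_cocycle i j k y,
    fun _ V σ hV hcov hsub ⟨s, hs, hcob⟩ => cocycle_not_coboundary V σ hV hcov hsub s hs hcob⟩

end
end

section
/- Let V be an open subspace of a topological space with a decomposition induced by an open subset U and closed complement X¹, and let F = i_!(ℤ_U) be the extension by zero of the constant sheaf ℤ on U along the open inclusion i : U → X_crs. If H¹(V, ℤ) = 0, then H¹(V, F) ≅ H⁰(V ∩ X¹, ℤ)/H⁰(V, ℤ). -/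
/-!
Embed `X₂` into an injective sheaf `I`. Dimension shifting along `0 → X₁ → I → I/X₁ → 0`
gives `H¹(V, X₁) = coker (Γ(V, I) → Γ(V, I/X₁))`, and along `0 → X₂ → I → I/X₂ → 0` it turns
`H¹(V, X₂) = 0` into surjectivity of `Γ(V, I) → Γ(V, I/X₂)`. The left exact rows
`0 → Γ(V, X₂) → Γ(V, I) → Γ(V, I/X₂) → 0` and `0 → Γ(V, X₃) → Γ(V, I/X₁) → Γ(V, I/X₂)`
share their last term, and a diagram chase identifies the cokernels of the first two columns.
-/

open CategoryTheory CategoryTheory.Limits TopologicalSpace Opposite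

noncomputable section

instance (Y : TopCat) :
    (sheafToPresheaf (Opens.grothendieckTopology Y) AddCommGrpCat).Additive :=
  { map_add := rfl }

def secΓ (Y : TopCat) (V : Opens Y) :
    Sheaf (Opens.grothendieckTopology Y) AddCommGrpCat ⥤ AddCommGrpCat :=
  sheafToPresheaf _ _ ⋙ (evaluation (Opens Y)ᵒᵖ AddCommGrpCat).obj (op V)

instance (Y : TopCat) (V : Opens Y) : (secΓ Y V).Additive := by
  unfold secΓ; infer_instance

/-- Sheaf cohomology `H^n(V, F)` of abelian sheaves on `Y`, as the `n`-th right derived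
functor of the sections-over-`V` functor (sections over `V` of an injective resolution). -/
def sheafH (Y : TopCat)
    [EnoughInjectives (Sheaf (Opens.grothendieckTopology Y) AddCommGrpCat)]
    (n : ℕ) (V : Opens Y) :
    Sheaf (Opens.grothendieckTopology Y) AddCommGrpCat ⥤ AddCommGrpCat :=
  (secΓ Y V).rightDerived n

instance (Y : TopCat) (V : Opens Y) : PreservesFiniteLimits (secΓ Y V) := by
  unfold secΓ; infer_instance

namespace CategoryTheory

namespace ShortComplex

variable {D : Type*} [Category* D] [Abelian D]

/-- The snake lemma for a morphism of exact rows `L₁ → L₂` that is an isomorphism on the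
third terms. -/
lemma isIso_cokernel_map_of_isIso_τ₃ {L₁ L₂ : ShortComplex D} (φ : L₁ ⟶ L₂) [IsIso φ.τ₃]
    (h₁ : L₁.Exact) [Epi L₁.g] (h₂ : L₂.Exact) [Mono L₂.f] :
    IsIso (cokernel.map φ.τ₁ φ.τ₂ L₁.f L₂.f φ.comm₁₂) := by
  have hmono : Mono (cokernel.map φ.τ₁ φ.τ₂ L₁.f L₂.f φ.comm₁₂) := by
    rw [Preadditive.mono_iff_cancel_zero]
    intro T₀ z hz
    obtain ⟨T₁, π₁, _, x, hx⟩ := surjective_up_to_refinements_of_epi (cokernel.π φ.τ₁) z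
    obtain ⟨T₂, π₂, _, c, hc⟩ := (exact_cokernel φ.τ₂).exact_up_to_refinements (x ≫ L₂.f) (by
      simpa [hz] using hx.symm =≫ cokernel.map φ.τ₁ φ.τ₂ L₁.f L₂.f φ.comm₁₂)
    obtain ⟨T₃, π₃, _, a, ha⟩ := h₁.exact_up_to_refinements c (by
      simp only at hc
      rw [← cancel_mono φ.τ₃, Category.assoc, ← φ.comm₂₃, ← reassoc_of% hc]
      simp)
    have hxa : π₃ ≫ π₂ ≫ x = a ≫ φ.τ₁ := by
      simp only at hc ha
      simp only [← cancel_mono L₂.f, Category.assoc, hc, reassoc_of% ha, φ.comm₁₂]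
    simp [← cancel_epi π₁, ← cancel_epi π₂, ← cancel_epi π₃, hx, reassoc_of% hxa]
  have hepi : Epi (cokernel.map φ.τ₁ φ.τ₂ L₁.f L₂.f φ.comm₁₂) := by
    rw [epi_iff_surjective_up_to_refinements]
    intro T₀ y
    obtain ⟨T₁, π₁, _, x, hx⟩ := surjective_up_to_refinements_of_epi (cokernel.π φ.τ₂) y
    obtain ⟨T₂, π₂, _, c, hc⟩ :=
      surjective_up_to_refinements_of_epi L₁.g (x ≫ L₂.g ≫ inv φ.τ₃)
    obtain ⟨T₃, π₃, _, u, hu⟩ := h₂.exact_up_to_refinements (π₂ ≫ x - c ≫ φ.τ₂) (by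
      rw [Preadditive.sub_comp, Category.assoc, Category.assoc, φ.comm₂₃, ← reassoc_of% hc]
      simp)
    refine ⟨T₃, π₃ ≫ π₂ ≫ π₁, inferInstance, u ≫ cokernel.π φ.τ₁, ?_⟩
    have := hu =≫ cokernel.π φ.τ₂
    simp only [Preadditive.sub_comp, Preadditive.comp_sub, Category.assoc, cokernel.condition,
      comp_zero, sub_zero] at this
    simp [hx, ← this]
  exact isIso_of_mono_of_epi _

end ShortComplex

namespace ShortComplex.ShortExact

variable {C : Type*} [Category* C] [Abelian C] {S : ShortComplex C} (hS : S.ShortExact)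
  {I : C} (j : S.X₂ ⟶ I)

/-- The map `X₂/X₁ ⟶ I/X₁` induced by `j`. -/
def toCokernelComp : S.X₃ ⟶ cokernel (S.f ≫ j) :=
  hS.gIsCokernel.desc
    (CokernelCofork.ofπ (j ≫ cokernel.π _) (by rw [← Category.assoc, cokernel.condition]))

lemma g_toCokernelComp : S.g ≫ hS.toCokernelComp j = j ≫ cokernel.π (S.f ≫ j) :=
  hS.gIsCokernel.fac _ WalkingParallelPair.one

lemma mono_toCokernelComp [Mono j] : Mono (hS.toCokernelComp j) := by
  have := hS.epi_g
  rw [Preadditive.mono_iff_cancel_zero]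
  intro T₀ z hz
  obtain ⟨T₁, π₁, _, y, hy⟩ := surjective_up_to_refinements_of_epi S.g z
  obtain ⟨T₂, π₂, _, x, hx⟩ := (ShortComplex.exact_cokernel (S.f ≫ j)).exact_up_to_refinements
    (y ≫ j) (by rw [Category.assoc, ← hS.g_toCokernelComp, ← reassoc_of% hy, hz, comp_zero])
  have hyx : π₂ ≫ y = x ≫ S.f := by
    simpa [← cancel_mono j] using hx
  simp [← cancel_epi π₁, ← cancel_epi π₂, hy, reassoc_of% hyx]

lemma toCokernelComp_comp_cokernelMap :
    hS.toCokernelComp j ≫ cokernel.map (S.f ≫ j) j S.f (𝟙 I) (by simp) = 0 :=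
  Cofork.IsColimit.hom_ext hS.gIsCokernel (by simp [reassoc_of% (hS.g_toCokernelComp j)])

lemma exact_toCokernelComp :
    (ShortComplex.mk _ _ (hS.toCokernelComp_comp_cokernelMap j)).Exact := by
  have := hS.epi_g
  rw [ShortComplex.exact_iff_exact_up_to_refinements]
  intro T₀ z hz
  obtain ⟨T₁, π₁, _, y, hy⟩ := surjective_up_to_refinements_of_epi (cokernel.π (S.f ≫ j)) z
  obtain ⟨T₂, π₂, _, x, hx⟩ := (ShortComplex.exact_cokernel j).exact_up_to_refinements y (by
    simpa [hz] using hy.symm =≫ cokernel.map (S.f ≫ j) j S.f (𝟙 I) (by simp))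
  refine ⟨T₂, π₂ ≫ π₁, inferInstance, x ≫ S.g, ?_⟩
  simp only at hx
  simp [hy, g_toCokernelComp, reassoc_of% hx]

def toCokernelCompHom :
    ShortComplex.mk j (cokernel.π j) (cokernel.condition j) ⟶
      ShortComplex.mk _ _ (hS.toCokernelComp_comp_cokernelMap j) where
  τ₁ := S.g
  τ₂ := cokernel.π (S.f ≫ j)
  τ₃ := 𝟙 _
  comm₁₂ := hS.g_toCokernelComp j
  comm₂₃ := by simp

end ShortComplex.ShortExact

namespace InjectiveResolution

variable {C : Type*} [Category* C] [Abelian C] {X Y : C} (J : InjectiveResolution Y)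
  (g : X ⟶ Y)

lemma comp_ι_f_zero_comp_complex_d :
    (g ≫ J.ι.f 0) ≫ J.cocomplex.d 0 1 = 0 :=
  (Category.assoc _ _ _).trans ((g ≫= J.ι_f_zero_comp_complex_d).trans comp_zero)

abbrev augmentAlong : CochainComplex C ℕ :=
  J.cocomplex.augment (g ≫ J.ι.f 0) (J.comp_ι_f_zero_comp_complex_d g)

lemma exactAt_augmentAlong_succ [Epi g] (n : ℕ) : (J.augmentAlong g).ExactAt (n + 1) := by
  rw [HomologicalComplex.exactAt_iff' _ n (n + 1) (n + 2) (by simp) (by simp)]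
  match n with
  | 0 =>
    let φ : (J.augmentAlong g).sc' 0 1 2 ⟶ ShortComplex.mk _ _ J.ι_f_zero_comp_complex_d :=
      { τ₁ := g, τ₂ := 𝟙 _, τ₃ := 𝟙 _
        comm₁₂ := (Category.comp_id _).symm
        comm₂₃ := (Category.id_comp _).trans (Category.comp_id _).symm }
    have : Epi φ.τ₁ := ‹Epi g›
    have : IsIso φ.τ₂ := inferInstanceAs (IsIso (𝟙 _))
    have : Mono φ.τ₃ := inferInstanceAs (Mono (𝟙 _))
    exact (ShortComplex.exact_iff_of_epi_of_isIso_of_mono φ).2 J.exact₀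
  | n + 1 => exact J.exact_succ n

def ofShortExact {S : ShortComplex C} (hS : S.ShortExact) [Injective S.X₂]
    (J : InjectiveResolution S.X₃) : InjectiveResolution S.X₁ where
  cocomplex := J.augmentAlong S.g
  injective n := by
    cases n
    · exact (inferInstance : Injective S.X₂)
    · exact (inferInstance : Injective (J.cocomplex.X _))
  ι := (CochainComplex.fromSingle₀Equiv _ _).symm ⟨S.f, (S.zero_assoc _).trans zero_comp⟩
  quasiIso := ⟨fun n => by
    have := hS.epi_g
    match n with
    | 0 =>
      rw [CochainComplex.quasiIsoAt₀_iff, ShortComplex.quasiIso_iff_of_zeros]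
      · let φ : S ⟶ ShortComplex.mk S.f (S.g ≫ J.ι.f 0) ((S.zero_assoc _).trans zero_comp) :=
          { τ₁ := 𝟙 _, τ₂ := 𝟙 _, τ₃ := J.ι.f 0 }
        have : Mono φ.τ₃ := (inferInstance : Mono (J.ι.f 0))
        refine (ShortComplex.exact_and_mono_f_iff_of_iso ?_).1
          ⟨(ShortComplex.exact_iff_of_epi_of_isIso_of_mono φ).1 hS.exact, hS.mono_f⟩
        refine ShortComplex.isoMk (Iso.refl _) (Iso.refl _) (Iso.refl _) ?_ ?_
        · dsimp
          erw [Category.id_comp, Category.comp_id]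
          exact CochainComplex.fromSingle₀Equiv_symm_apply_f_zero (C := J.augmentAlong S.g) _ _
        · dsimp
          erw [Category.id_comp, Category.comp_id]
          rfl
      all_goals rfl
    | n + 1 =>
      rw [quasiIsoAt_iff_exactAt _ _ (CochainComplex.exactAt_succ_single_obj _ _)]
      exact J.exactAt_augmentAlong_succ S.g n⟩

variable {D : Type*} [Category* D] [Abelian D] (F : C ⥤ D) [F.Additive] [PreservesFiniteLimits F]

def homologyOneMapAugmentAlongIso :
    ((F.mapHomologicalComplex _).obj (J.augmentAlong g)).homology 1 ≅ cokernel (F.map g) := by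
  set K := (F.mapHomologicalComplex _).obj (J.augmentAlong g)
  set T := K.sc' 0 1 2
  have hT : IsLimit (KernelFork.ofι (F.map (J.ι.f 0)) (f := T.g) (by
      show F.map (J.ι.f 0) ≫ F.map (J.cocomplex.d 0 1) = 0
      rw [← F.map_comp, J.ι_f_zero_comp_complex_d, F.map_zero])) :=
    KernelFork.mapIsLimit J.kernelFork J.isLimitKernelFork F
  let e : F.obj Y ≅ kernel T.g := hT.conePointUniqueUpToIso (limit.isLimit _)
  have he : e.hom ≫ kernel.ι T.g = F.map (J.ι.f 0) :=
    hT.conePointUniqueUpToIso_hom_comp (limit.isLimit _) WalkingParallelPair.zero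
  refine ShortComplex.homologyMapIso (K.isoSc' 0 1 2 (by simp) (by simp)) ≪≫
    T.homologyIsoCokernelLift ≪≫ cokernel.mapIso _ (F.map g) (Iso.refl _) e.symm ?_
  rw [← cancel_mono e.hom, ← cancel_mono (kernel.ι T.g)]
  simp only [Iso.refl_hom, Iso.symm_hom, Category.assoc, Iso.inv_hom_id, Category.comp_id,
    kernel.lift_ι, he]
  erw [Category.id_comp, ← F.map_comp]
  rfl

end InjectiveResolution

namespace Functor

variable {C : Type*} [Category* C] [Abelian C] {D : Type*} [Category* D] [Abelian D]
  (F : C ⥤ D) [F.Additive] [PreservesFiniteLimits F]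

def rightDerivedOneIsoCokernel [HasInjectiveResolutions C] {S : ShortComplex C}
    (hS : S.ShortExact) [Injective S.X₂] :
    (F.rightDerived 1).obj S.X₁ ≅ cokernel (F.map S.g) :=
  (InjectiveResolution.ofShortExact hS (injectiveResolution S.X₃)).isoRightDerivedObj F 1 ≪≫
    (injectiveResolution S.X₃).homologyOneMapAugmentAlongIso S.g F

def rightDerivedOneIsoCokernelOfIsZero [EnoughInjectives C] {S : ShortComplex C}
    (hS : S.ShortExact) (h : IsZero ((F.rightDerived 1).obj S.X₂)) :
    (F.rightDerived 1).obj S.X₁ ≅ cokernel ((F.rightDerived 0).map S.g) := by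
  have := hS.mono_f
  let j := Injective.ι S.X₂
  have := hS.mono_toCokernelComp j
  let T₁ := ShortComplex.mk _ _ (cokernel.condition (S.f ≫ j))
  let T₂ := ShortComplex.mk _ _ (cokernel.condition j)
  let Q := ShortComplex.mk _ _ (hS.toCokernelComp_comp_cokernelMap j)
  have hT₁ : T₁.ShortExact := { exact := ShortComplex.exact_cokernel _ }
  have hT₂ : T₂.ShortExact := { exact := ShortComplex.exact_cokernel _ }
  have : Epi (F.mapShortComplex.obj T₂).g :=
    Preadditive.epi_of_isZero_cokernel _ (h.of_iso (F.rightDerivedOneIsoCokernel hT₂).symm)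
  have : Mono (F.mapShortComplex.obj Q).f := inferInstanceAs (Mono (F.map (hS.toCokernelComp j)))
  have : IsIso (F.mapShortComplex.map (hS.toCokernelCompHom j)).τ₃ :=
    inferInstanceAs (IsIso (F.map (𝟙 _)))
  have hα := ShortComplex.isIso_cokernel_map_of_isIso_τ₃
    (F.mapShortComplex.map (hS.toCokernelCompHom j))
    (hT₂.exact.map_of_mono_of_preservesKernel F inferInstance inferInstance)
    ((hS.exact_toCokernelComp j).map_of_mono_of_preservesKernel F inferInstance inferInstance)
  exact F.rightDerivedOneIsoCokernel (S := T₁) hT₁ ≪≫ (@asIso _ _ _ _ _ hα).symm ≪≫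
    (cokernel.mapIso _ _ (F.rightDerivedZeroIsoSelf.app S.X₂) (F.rightDerivedZeroIsoSelf.app S.X₃)
      (F.rightDerivedZeroIsoSelf.hom.naturality S.g)).symm

end Functor

end CategoryTheory

theorem H1_of_extension_by_zero_general (Y : TopCat)
    [EnoughInjectives (Sheaf (Opens.grothendieckTopology Y) AddCommGrpCat)]
    (S : ShortComplex (Sheaf (Opens.grothendieckTopology Y) AddCommGrpCat))
    (hS : S.ShortExact)
    (V : Opens Y)
    (hV : IsZero ((sheafH Y 1 V).obj S.X₂)) :
    Nonempty ((sheafH Y 1 V).obj S.X₁ ≅ cokernel ((sheafH Y 0 V).map S.g)) :=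
  ⟨(secΓ Y V).rightDerivedOneIsoCokernelOfIsZero hS hV⟩

/-- let `U ⊆ Y` be open with closed complement `X¹` (with inclusion `ι`),
and let `F = i_!(ℤ_U)` be the extension by zero of the constant sheaf `ℤ` on `U`,
i.e. the abelian sheaf fitting into the canonical short exact sequence
`0 → F → ℤ_Y → ℤ_{X¹} → 0`, where `ℤ_Y` is the constant sheaf `ℤ` on `Y` and
`ℤ_{X¹}` is the pushforward to `Y` of the constant sheaf `ℤ` on `X¹`.
If `H¹(V, ℤ) = 0` for an open `V ⊆ Y`, then
`H¹(V, F) ≅ H⁰(V ∩ X¹, ℤ)/H⁰(V, ℤ)`, i.e. `H¹(V, F)` is the cokernel of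
`H⁰(V, ℤ_Y) → H⁰(V, ℤ_{X¹}) = H⁰(V ∩ X¹, ℤ)`. -/
theorem H1_of_extension_by_zero (Y : TopCat)
    [EnoughInjectives (Sheaf (Opens.grothendieckTopology Y) AddCommGrpCat)]
    (U : Opens Y) (ι : TopCat.of (((U : Set Y)ᶜ : Set Y)) ⟶ Y)
    (hι : ∀ z, ι z = z.1)
    (S : ShortComplex (Sheaf (Opens.grothendieckTopology Y) AddCommGrpCat))
    (hS : S.ShortExact)
    (hX2 : S.X₂ =
      (constantSheaf (Opens.grothendieckTopology Y) AddCommGrpCat).obj (AddCommGrpCat.of ℤ))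
    (hX3 : S.X₃ = (TopCat.Sheaf.pushforward AddCommGrpCat ι).obj
      ((constantSheaf (Opens.grothendieckTopology
          (TopCat.of (((U : Set Y)ᶜ : Set Y)))) AddCommGrpCat).obj (AddCommGrpCat.of ℤ)))
    (V : Opens Y)
    (hV : IsZero ((sheafH Y 1 V).obj S.X₂)) :
    Nonempty ((sheafH Y 1 V).obj S.X₁ ≅ cokernel ((sheafH Y 0 V).map S.g)) :=
  H1_of_extension_by_zero_general Y S hS V hV
end
end

section
/- Every point y ≠ x of X_crs and the origin x can be separated: there exist disjoint τ-open sets U ∋ x and V ∋ y such that V meets only one closed 2-cell and U contains all the remaining closed 2-cells. -/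
open Set Topology Filter

noncomputable section

/-!
A point `y ≠ x` lies in a single disk `C_n`, away from the wedge point. Regularity of the disk
gives a closed neighbourhood `K` of `y` in `C_n` avoiding the wedge point; such a set, and its
interior, are saturated for the gluing, hence CW-closed (CW-open). Then `V = int K` misses the
origin and `U = X \ K` contains every cell but `C_n`, so both are `τ`-open.
-/

instance : T3Space D := inferInstanceAs (T3Space {z : ℂ // ‖z‖ ≤ 1})

section ImagePt

lemma isQuotientMap_uncurry_pt : IsQuotientMap (Function.uncurry pt) :=
  isQuotientMap_quotient_mk'

variable {n : ℕ} {A : Set D}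

lemma preimage_image_pt (hA : basept ∉ A) :
    Function.uncurry pt ⁻¹' (pt n '' A) = {n} ×ˢ A := by
  ext ⟨m, w⟩
  constructor
  · rintro ⟨w', hw', heq⟩
    rcases Quotient.exact heq with h | ⟨rfl, -⟩
    · cases h
      exact ⟨rfl, hw'⟩
    · exact absurd hw' hA
  · rintro ⟨rfl, hw⟩
    exact ⟨w, hw, rfl⟩

lemma isOpen_image_pt (hA : basept ∉ A) (hAo : IsOpen A) : IsOpen (pt n '' A) := by
  rw [← isQuotientMap_uncurry_pt.isOpen_preimage, preimage_image_pt hA]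
  exact (isOpen_discrete _).prod hAo

lemma isClosed_image_pt (hA : basept ∉ A) (hAc : IsClosed A) : IsClosed (pt n '' A) := by
  rw [← isQuotientMap_uncurry_pt.isClosed_preimage, preimage_image_pt hA]
  exact (isClosed_discrete _).prod hAc

lemma origin_notMem_image_pt (hA : basept ∉ A) : origin ∉ pt n '' A := by
  have : (0, basept) ∉ ({n} ×ˢ A : Set (ℕ × D)) := fun h => hA h.2
  rwa [← preimage_image_pt hA] at this

lemma eq_of_image_pt_inter_cell_nonempty (hA : basept ∉ A) {m : ℕ}
    (h : (pt n '' A ∩ cell m).Nonempty) : m = n := by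
  obtain ⟨-, ha, w, rfl⟩ := h
  have : (m, w) ∈ Function.uncurry pt ⁻¹' (pt n '' A) := ha
  rw [preimage_image_pt hA] at this
  exact this.1

lemma cell_subset_compl_image_pt (hA : basept ∉ A) {m : ℕ} (hm : m ≠ n) :
    cell m ⊆ (pt n '' A)ᶜ :=
  fun a ham haA => hm (eq_of_image_pt_inter_cell_nonempty hA ⟨a, haA, ham⟩)

lemma crsOpen_image_pt (hA : basept ∉ A) (hAo : IsOpen A) : IsOpen[crsTop] (pt n '' A) :=
  ⟨isOpen_image_pt hA hAo, Or.inl (origin_notMem_image_pt hA)⟩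

lemma crsOpen_compl_image_pt (hA : basept ∉ A) (hAc : IsClosed A) :
    IsOpen[crsTop] (pt n '' A)ᶜ := by
  refine ⟨(isClosed_image_pt hA hAc).isOpen_compl, Or.inr ((finite_singleton n).subset ?_)⟩
  intro m hm
  by_contra hne
  exact hm (sdiff_subset.trans (cell_subset_compl_image_pt hA hne))

end ImagePt

/-- every point `y ≠ x` can be separated from the origin by disjoint τ-open
sets `U ∋ x`, `V ∋ y` such that `V` meets only one closed 2-cell while `U` contains all
the remaining closed 2-cells. -/
theorem crs_separation (y : X) (hy : y ≠ origin) :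
    ∃ U V : Set X, IsOpen[crsTop] U ∧ IsOpen[crsTop] V ∧ origin ∈ U ∧ y ∈ V ∧
      Disjoint U V ∧
      ∃ n₀ : ℕ, (∀ m, (V ∩ cell m).Nonempty → m = n₀) ∧
        ∀ m, m ≠ n₀ → cell m ⊆ U := by
  obtain ⟨⟨n, z⟩, rfl⟩ := Quotient.exists_rep y
  have hz : z ≠ basept := by
    rintro rfl
    exact hy (Quotient.sound (Or.inr ⟨rfl, rfl⟩))
  obtain ⟨K, hKz, hKc, hK⟩ :=
    exists_mem_nhds_isClosed_subset (isOpen_compl_singleton.mem_nhds hz)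
  have hbK : basept ∉ K := fun h => hK h rfl
  have hbS : basept ∉ interior K := fun h => hbK (interior_subset h)
  refine ⟨(pt n '' K)ᶜ, pt n '' interior K, crsOpen_compl_image_pt hbK hKc,
    crsOpen_image_pt hbS isOpen_interior, origin_notMem_image_pt hbK,
    ⟨z, mem_interior_iff_mem_nhds.2 hKz, rfl⟩,
    disjoint_compl_left.mono_right (image_mono interior_subset), n,
    fun m hm => eq_of_image_pt_inter_cell_nonempty hbS hm,
    fun m hm => cell_subset_compl_image_pt hbK hm⟩

end
end
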